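/- If α(X) ∈ E_n(R[X]) (resp. the elementary quadratic group EQ_{2n}(R[X],Λ[X])) satisfies α(0) = I, then α(X) is a product of elements of the form ε·g(Xf(X))·ε⁻¹, where ε is an elementary generator with constant entries (over R) and g(Xf(X)) is an elementary generator congruent to the identity modulo (X). -/

import Mathlib

/-!
Write `α₀` for the constant part of `α`, i.e. `α(0)` viewed in `E_n(R) ⊆ E_n(R[X])`. Every elementary
generator splits additively as `e_{ij}(f) = e_{ij}(X · f/X) · e_{ij}(f(0))`, and the subgroup `C`
generated by the `E_n(R)`-conjugates of the `e_{ij}(X g)` is normalised by `E_n(R)`. Hence, by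
induction on a word in the generators, `α ∈ C · α₀` for every `α ∈ E_n(R[X])`
(`α β = γ α₀ δ β₀ = (γ · α₀ δ α₀⁻¹) · α₀ β₀`), and `α₀ = I` gives `α ∈ C`.
-/

open Matrix Polynomial

namespace Matrix

section Transvection

variable {n A : Type*} [DecidableEq n] [CommRing A]

theorem isUnit_transvection [Fintype n] {i j : n} (hij : i ≠ j) (c : A) :
    IsUnit (transvection i j c) :=
  (isUnit_iff_isUnit_det _).2 (by rw [det_transvection_of_ne i j hij]; exact isUnit_one)

theorem map_transvection {B : Type*} [CommRing B] (φ : A →+* B) (i j : n) (c : A) :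
    (transvection i j c).map φ = transvection i j (φ c) := by
  simp [transvection, Matrix.map_add]

end Transvection

variable {n R : Type*} [Fintype n] [DecidableEq n] [CommRing R]

section

variable (n R)

def elementaryTransvections : Set (Matrix n n R[X]) :=
  {M | ∃ (i j : n) (f : R[X]), i ≠ j ∧ M = transvection i j f}

def constantTransvections : Set (Matrix n n R[X]) :=
  {N | ∃ (i j : n) (a : R), i ≠ j ∧ N = transvection i j (C a)}

def conjugatedTransvections : Set (Matrix n n R[X]) :=
  {M | ∃ ε ε' : Matrix n n R[X], ε ∈ Submonoid.closure (constantTransvections n R) ∧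
      ε * ε' = 1 ∧ ε' * ε = 1 ∧
      ∃ (i j : n) (f : R[X]), i ≠ j ∧ M = ε * transvection i j (X * f) * ε'}

noncomputable def constantPart : Matrix n n R[X] →+* Matrix n n R[X] :=
  ((C : R →+* R[X]).comp (evalRingHom 0)).mapMatrix

end

theorem constantPart_apply (α : Matrix n n R[X]) :
    constantPart n R α = (α.map (eval 0)).map C := by
  rw [constantPart, RingHom.mapMatrix_apply, Matrix.map_map]
  rfl

theorem constantPart_transvection (i j : n) (f : R[X]) :
    constantPart n R (transvection i j f) = transvection i j (C (f.eval 0)) := by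
  rw [constantPart, RingHom.mapMatrix_apply, map_transvection]
  rfl

theorem isUnit_of_mem_closure_constantTransvections {β : Matrix n n R[X]}
    (hβ : β ∈ Submonoid.closure (constantTransvections n R)) : IsUnit β := by
  refine (Submonoid.closure_le (S := IsUnit.submonoid _)).2 ?_ hβ
  rintro _ ⟨i, j, a, hij, rfl⟩
  exact isUnit_transvection hij _

theorem constantPart_mem_closure {α : Matrix n n R[X]}
    (hα : α ∈ Submonoid.closure (elementaryTransvections n R)) :
    constantPart n R α ∈ Submonoid.closure (constantTransvections n R) := by
  refine (Submonoid.closure_le (S := (Submonoid.closure _).comap (constantPart n R))).2 ?_ hα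
  rintro _ ⟨i, j, f, hij, rfl⟩
  exact Submonoid.subset_closure ⟨i, j, f.eval 0, hij, constantPart_transvection i j f⟩

theorem transvection_eq_mul_constantPart {i j : n} (hij : i ≠ j) (f : R[X]) :
    transvection i j f =
      transvection i j (X * f.divX) * constantPart n R (transvection i j f) := by
  rw [constantPart_transvection, transvection_mul_transvection_same i j hij,
    ← coeff_zero_eq_eval_zero, X_mul_divX_add]

theorem conj_mem_closure_conjugatedTransvections {β β' δ : Matrix n n R[X]}
    (hβ : β ∈ Submonoid.closure (constantTransvections n R)) (hββ' : β * β' = 1)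
    (hβ'β : β' * β = 1) (hδ : δ ∈ Submonoid.closure (conjugatedTransvections n R)) :
    β * δ * β' ∈ Submonoid.closure (conjugatedTransvections n R) := by
  induction hδ using Submonoid.closure_induction with
  | one => simp [hββ']
  | mem x hx =>
    obtain ⟨ε, ε', hε, hεε', hε'ε, i, j, f, hij, rfl⟩ := hx
    refine Submonoid.subset_closure ⟨β * ε, ε' * β', Submonoid.mul_mem _ hβ hε, ?_, ?_,
      i, j, f, hij, by simp only [mul_assoc]⟩
    · rw [mul_assoc, ← mul_assoc ε, hεε', one_mul, hββ']
    · rw [mul_assoc, ← mul_assoc β', hβ'β, one_mul, hε'ε]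
  | mul x y _ _ hx hy =>
    convert Submonoid.mul_mem _ hx hy using 1
    calc β * (x * y) * β' = β * x * (β' * β) * y * β' := by rw [hβ'β]; noncomm_ring
      _ = β * x * β' * (β * y * β') := by noncomm_ring

theorem exists_mem_closure_conjugatedTransvections_mul_constantPart {α : Matrix n n R[X]}
    (hα : α ∈ Submonoid.closure (elementaryTransvections n R)) :
    ∃ γ ∈ Submonoid.closure (conjugatedTransvections n R), α = γ * constantPart n R α := by
  induction hα using Submonoid.closure_induction with
  | one => exact ⟨1, Submonoid.one_mem _, by simp⟩
  | mem x hx =>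
    obtain ⟨i, j, f, hij, rfl⟩ := hx
    refine ⟨transvection i j (X * f.divX), Submonoid.subset_closure ?_,
      transvection_eq_mul_constantPart hij f⟩
    exact ⟨1, 1, Submonoid.one_mem _, one_mul 1, one_mul 1, i, j, f.divX, hij, by simp⟩
  | mul x y hx _ ihx ihy =>
    obtain ⟨γ, hγ, hxγ⟩ := ihx
    obtain ⟨δ, hδ, hyδ⟩ := ihy
    have hx₀ := constantPart_mem_closure hx
    obtain ⟨x₀', hx₀x₀', hx₀'x₀⟩ :=
      isUnit_iff_exists.1 (isUnit_of_mem_closure_constantTransvections hx₀)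
    refine ⟨γ * (constantPart n R x * δ * x₀'), Submonoid.mul_mem _ hγ
      (conj_mem_closure_conjugatedTransvections hx₀ hx₀x₀' hx₀'x₀ hδ), ?_⟩
    calc x * y = γ * constantPart n R x * (δ * constantPart n R y) := by rw [← hyδ, ← hxγ]
      _ = γ * constantPart n R x * (δ * (x₀' * constantPart n R x) * constantPart n R y) := by
        rw [hx₀'x₀, mul_one]
      _ = γ * (constantPart n R x * δ * x₀') * constantPart n R (x * y) := by
        rw [map_mul]; noncomm_ring

end Matrix

/-- If `α(X) ∈ E_m(R[X])` and `α(0) = I`, then `α(X)` is a product of elements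
`ε·e_{ij}(X·f(X))·ε⁻¹` with `ε ∈ E_m(R)` (constant entries) and `e_{ij}(X·f(X)) ≡ I mod (X)`. -/
theorem elementary_polynomial_decomposition {R : Type*} [CommRing R] (m : ℕ)
    (α : Matrix (Fin m) (Fin m) (Polynomial R))
    (hα : α ∈ Submonoid.closure
      {M : Matrix (Fin m) (Fin m) (Polynomial R) |
        ∃ (i j : Fin m) (f : Polynomial R), i ≠ j ∧
          M = 1 + Matrix.single i j f})
    (h0 : α.map (Polynomial.eval 0) = 1) :
    α ∈ Submonoid.closure
      {M : Matrix (Fin m) (Fin m) (Polynomial R) |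
        ∃ ε ε' : Matrix (Fin m) (Fin m) (Polynomial R),
          ε ∈ Submonoid.closure
            {N : Matrix (Fin m) (Fin m) (Polynomial R) |
              ∃ (i j : Fin m) (a : R), i ≠ j ∧
                N = 1 + Matrix.single i j (Polynomial.C a)} ∧
          ε * ε' = 1 ∧ ε' * ε = 1 ∧
          ∃ (i j : Fin m) (f : Polynomial R), i ≠ j ∧
            M = ε * (1 + Matrix.single i j (Polynomial.X * f)) * ε'} := by
  obtain ⟨γ, hγ, hαγ⟩ := exists_mem_closure_conjugatedTransvections_mul_constantPart hα
  have hα₀ : constantPart (Fin m) R α = 1 := by simp [constantPart_apply, h0]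
  rw [hαγ, hα₀, mul_one]
  exact hγ
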